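/- Let 𝒟 ⊆ 𝒞 and let ρ : 𝒞 → 𝒟 be a locally Lipschitz retraction (i.e. ρ is continuous, locally Lipschitz, and ρ(φ) = φ for all φ ∈ 𝒟) such that for all φ₀ ∈ 𝒞, δ > 0 and R > 0 one has sup{ lip ρ(φ) : φ ∈ V(φ₀;δ,R) } < ∞. Then, if f : 𝒟 → ℝⁿ is almost locally Lipschitz, so is F := f ∘ ρ : 𝒞 → ℝⁿ. -/

import Mathlib

open scoped ENNReal

noncomputable section

/-- The state space 𝒞 = C([-h,0], ℝⁿ) with the sup-norm. -/
abbrev Hist (h : ℝ) (n : ℕ) : Type :=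
  C(Set.Icc (-h) (0:ℝ), Fin n → ℝ)

/-- The segment x_t ∈ 𝒞 of a continuous function x : ℝ → ℝⁿ, x_t(θ) = x(t+θ). -/
def seg {h : ℝ} {n : ℕ} (x : C(ℝ, Fin n → ℝ)) (t : ℝ) : Hist h n :=
  ⟨fun θ => x (t + θ.1), x.continuous.comp (continuous_const.add continuous_subtype_val)⟩

/-- `LipBdd R φ` means `lip φ ≤ R`, i.e. φ is R-Lipschitz. -/
def LipBdd {h : ℝ} {n : ℕ} (R : ℝ) (φ : Hist h n) : Prop :=
  ∀ s t : Set.Icc (-h) (0:ℝ), ‖φ s - φ t‖ ≤ R * |s.1 - t.1|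

/-- `lip φ < ∞`. -/
def LipFin {h : ℝ} {n : ℕ} (φ : Hist h n) : Prop := ∃ R : ℝ, LipBdd R φ

/-- V(φ₀; δ, R) = { φ : ‖φ-φ₀‖ ≤ δ, lip φ ≤ R }. -/
def Vset {h : ℝ} {n : ℕ} (φ₀ : Hist h n) (δ R : ℝ) : Set (Hist h n) :=
  {φ | ‖φ - φ₀‖ ≤ δ ∧ LipBdd R φ}

/-- A functional f : 𝒟 ⊆ 𝒞 → E is almost locally Lipschitz. -/
def AlmostLocLip {h : ℝ} {n : ℕ} (𝒟 : Set (Hist h n)) {E : Type*} [NormedAddCommGroup E]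
    (f : Hist h n → E) : Prop :=
  ContinuousOn f 𝒟 ∧ ∀ φ₀ ∈ 𝒟, ∀ R : ℝ, 0 < R → ∃ δ : ℝ, 0 < δ ∧ ∃ k : ℝ, 0 ≤ k ∧
    ∀ φ ∈ Vset φ₀ δ R ∩ 𝒟, ∀ ψ ∈ Vset φ₀ δ R ∩ 𝒟, ‖f φ - f ψ‖ ≤ k * ‖φ - ψ‖

/-- Solution of x'(t) = f(x_t) (t₀ ≤ t ≤ t₀+α), x_{t₀} = φ, on the closed interval
[t₀-h, t₀+α], for a functional with domain 𝒟. -/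
def IsSolIcc {h : ℝ} {n : ℕ} (𝒟 : Set (Hist h n)) (f : Hist h n → Fin n → ℝ)
    (t₀ α : ℝ) (φ : Hist h n) (x : C(ℝ, Fin n → ℝ)) : Prop :=
  seg x t₀ = φ ∧ ∀ t ∈ Set.Icc t₀ (t₀ + α),
    seg (h := h) x t ∈ 𝒟 ∧ HasDerivAt (fun s => x s) (f (seg x t)) t

/-- Solution on the half-open interval [t₀-h, t₀+c), where c ∈ (0,∞]. -/
def IsSolIco {h : ℝ} {n : ℕ} (𝒟 : Set (Hist h n)) (f : Hist h n → Fin n → ℝ)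
    (t₀ : ℝ) (c : ℝ≥0∞) (φ : Hist h n) (x : C(ℝ, Fin n → ℝ)) : Prop :=
  seg x t₀ = φ ∧ ∀ t : ℝ, t₀ ≤ t → ENNReal.ofReal (t - t₀) < c →
    seg (h := h) x t ∈ 𝒟 ∧ HasDerivAt (fun s => x s) (f (seg x t)) t

/-- A non-continuable solution on [t₀-h, t₀+c): it admits no extension to a solution
on a strictly larger interval. -/
def Noncontinuable {h : ℝ} {n : ℕ} (𝒟 : Set (Hist h n)) (f : Hist h n → Fin n → ℝ)
    (t₀ : ℝ) (c : ℝ≥0∞) (φ : Hist h n) (x : C(ℝ, Fin n → ℝ)) : Prop :=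
  IsSolIco 𝒟 f t₀ c φ x ∧
    ¬ ∃ c' : ℝ≥0∞, c < c' ∧ ∃ x' : C(ℝ, Fin n → ℝ), IsSolIco 𝒟 f t₀ c' φ x' ∧
      ∀ t : ℝ, t₀ - h ≤ t → ENNReal.ofReal (t - t₀) < c → x' t = x t

/-! Near `φ₀` the map `ρ` is `K`-Lipschitz on a closed ball, and by the hypothesis on `lip ρ(φ)`
it sends a small `V(φ₀;δ,R)` into some `V(ρ φ₀;δ',M) ∩ 𝒟` on which `f` is `k`-Lipschitz.
Hence `f ∘ ρ` is `kK`-Lipschitz on `V(φ₀;δ,R)`. -/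

open Metric Set

section AlmostLocLip

variable {h : ℝ} {n : ℕ}

theorem LipBdd.mono {R R' : ℝ} {φ : Hist h n} (hφ : LipBdd R φ) (hR : R ≤ R') :
    LipBdd R' φ := fun s t =>
  (hφ s t).trans (mul_le_mul_of_nonneg_right hR (abs_nonneg _))

theorem Vset_subset_closedBall (φ₀ : Hist h n) (δ R : ℝ) :
    Vset φ₀ δ R ⊆ closedBall φ₀ δ := fun _ hφ => by
  simpa only [mem_closedBall, dist_eq_norm] using hφ.1

theorem Vset_mono {φ₀ : Hist h n} {δ δ' R : ℝ} (hδ : δ ≤ δ') :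
    Vset φ₀ δ R ⊆ Vset φ₀ δ' R := fun _ hφ => ⟨hφ.1.trans hδ, hφ.2⟩

theorem mapsTo_Vset_of_lipschitzOnWith {g : Hist h n → Hist h n} {φ₀ : Hist h n}
    {ε δ δ' R M : ℝ} {K : NNReal} (hg : LipschitzOnWith K g (closedBall φ₀ ε))
    (hM : ∀ φ ∈ Vset φ₀ ε R, LipBdd M (g φ)) (hδε : δ ≤ ε) (hKδ : K * δ ≤ δ') :
    MapsTo g (Vset φ₀ δ R) (Vset (g φ₀) δ' M) := by
  intro φ hφ
  have hφε : φ ∈ Vset φ₀ ε R := Vset_mono hδε hφ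
  have hε : 0 ≤ ε := (norm_nonneg _).trans hφε.1
  refine ⟨?_, hM φ hφε⟩
  calc ‖g φ - g φ₀‖ = dist (g φ) (g φ₀) := (dist_eq_norm _ _).symm
    _ ≤ K * dist φ φ₀ :=
      hg.dist_le_mul φ (Vset_subset_closedBall φ₀ ε R hφε) φ₀ (mem_closedBall_self hε)
    _ ≤ K * δ := by rw [dist_eq_norm]; exact mul_le_mul_of_nonneg_left hφ.1 K.coe_nonneg
    _ ≤ δ' := hKδ

theorem LocallyLipschitz.exists_lipschitzOnWith_closedBall {α β : Type*} [PseudoMetricSpace α]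
    [PseudoEMetricSpace β] {g : α → β} (hg : LocallyLipschitz g) (x : α) :
    ∃ ε > 0, ∃ K, LipschitzOnWith K g (closedBall x ε) := by
  obtain ⟨K, t, ht, hK⟩ := hg x
  obtain ⟨ε, hε, hεt⟩ := nhds_basis_closedBall.mem_iff.mp ht
  exact ⟨ε, hε, K, hK.mono hεt⟩

theorem AlmostLocLip.comp {E : Type*} [NormedAddCommGroup E] {𝒟 𝒟' : Set (Hist h n)}
    {f : Hist h n → E} (hf : AlmostLocLip 𝒟 f) {g : Hist h n → Hist h n}
    (hg_maps : MapsTo g 𝒟' 𝒟) (hg : LocallyLipschitz g)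
    (hg_lip : ∀ (φ₀ : Hist h n) (δ R : ℝ), 0 < δ → 0 < R →
      ∃ M : ℝ, ∀ φ ∈ Vset φ₀ δ R, LipBdd M (g φ)) :
    AlmostLocLip 𝒟' (f ∘ g) := by
  refine ⟨hf.1.comp hg.continuous.continuousOn hg_maps, fun φ₀ hφ₀ R hR => ?_⟩
  obtain ⟨ε, hε, K, hK⟩ := hg.exists_lipschitzOnWith_closedBall φ₀
  obtain ⟨M, hM⟩ := hg_lip φ₀ ε R hε hR
  obtain ⟨δ', hδ', k, hk, hf_lip⟩ :=
    hf.2 (g φ₀) (hg_maps hφ₀) (max M 1) (lt_max_of_lt_right one_pos)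
  set δ := min ε (δ' / (K + 1))
  have hK1 : (0 : ℝ) < K + 1 := by positivity
  have hKδ : K * δ ≤ δ' := calc
    K * δ ≤ (K + 1) * (δ' / (K + 1)) :=
      mul_le_mul (by linarith) (min_le_right _ _) (by positivity) hK1.le
    _ = δ' := mul_div_cancel₀ _ hK1.ne'
  have hmaps : MapsTo g (Vset φ₀ δ R) (Vset (g φ₀) δ' (max M 1)) :=
    mapsTo_Vset_of_lipschitzOnWith hK (fun φ hφ => (hM φ hφ).mono (le_max_left _ _))
      (min_le_left _ _) hKδ
  have hK_lip : LipschitzOnWith K g (Vset φ₀ δ R) :=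
    hK.mono ((Vset_mono (min_le_left _ _)).trans (Vset_subset_closedBall φ₀ ε R))
  refine ⟨δ, lt_min hε (by positivity), k * K, by positivity, ?_⟩
  rintro φ ⟨hφ, hφ𝒟⟩ ψ ⟨hψ, hψ𝒟⟩
  calc ‖f (g φ) - f (g ψ)‖ ≤ k * ‖g φ - g ψ‖ :=
        hf_lip _ ⟨hmaps hφ, hg_maps hφ𝒟⟩ _ ⟨hmaps hψ, hg_maps hψ𝒟⟩
    _ ≤ k * (K * ‖φ - ψ‖) := by
        simpa only [dist_eq_norm] using
          mul_le_mul_of_nonneg_left (hK_lip.dist_le_mul φ hφ ψ hψ) hk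
    _ = k * K * ‖φ - ψ‖ := (mul_assoc _ _ _).symm

end AlmostLocLip

theorem statement2_general (h : ℝ) (n : ℕ)
    (𝒟 : Set (Hist h n)) (ρ : Hist h n → Hist h n)
    (hρmem : ∀ φ, ρ φ ∈ 𝒟)
    (hρloc : LocallyLipschitz ρ)
    (hρlipbd : ∀ (φ₀ : Hist h n) (δ R : ℝ), 0 < δ → 0 < R →
      ∃ M : ℝ, ∀ φ ∈ Vset φ₀ δ R, LipBdd M (ρ φ))
    (f : Hist h n → Fin n → ℝ) (hf : AlmostLocLip 𝒟 f) :
    AlmostLocLip Set.univ (f ∘ ρ) :=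
  hf.comp (fun φ _ => hρmem φ) hρloc hρlipbd

/-- Lemma 2.6. If ρ : 𝒞 → 𝒟 is a locally Lipschitz retraction with
sup{ lip ρ(φ) : φ ∈ V(φ₀;δ,R) } < ∞ for all φ₀, δ, R, and f : 𝒟 → ℝⁿ is almost locally
Lipschitz, then so is F := f ∘ ρ : 𝒞 → ℝⁿ. -/
theorem statement2 (h : ℝ) (hh : 0 < h) (n : ℕ) (hn : 1 ≤ n)
    (𝒟 : Set (Hist h n)) (ρ : Hist h n → Hist h n)
    (hρmem : ∀ φ, ρ φ ∈ 𝒟) (hρid : ∀ φ ∈ 𝒟, ρ φ = φ)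
    (hρloc : LocallyLipschitz ρ)
    (hρlipbd : ∀ (φ₀ : Hist h n) (δ R : ℝ), 0 < δ → 0 < R →
      ∃ M : ℝ, ∀ φ ∈ Vset φ₀ δ R, LipBdd M (ρ φ))
    (f : Hist h n → Fin n → ℝ) (hf : AlmostLocLip 𝒟 f) :
    AlmostLocLip Set.univ (f ∘ ρ) :=
  statement2_general h n 𝒟 ρ hρmem hρloc hρlipbd f hf
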